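/- Let R be a generalized quantum R-matrix, let n ≥ 1, and fix z₁,…,zₙ ∈ ℂ. Let J = (Fin N)ⁿ with weight map w(k) = ∑_{i=1}^n ε_{k_i}, and define the monodromy matrix L(z,λ), a matrix indexed by Fin N × J ≅ (Fin N)^{n+1} (the auxiliary Fin N being factor 0 and the i-th component of J being factor i), as the ordered product (left to right, j = 1,…,n) L(z,λ) = ∏_{j=1}^{n} R^{(0,j)}(z − z_j, λ − η∑_{1≤i<j} h^{(i)} + η∑_{j<i≤n} h^{(i)}). Then (J, w, L) is a representation of A(R): L is of weight zero and satisfies the RLL relation with respect to R. -/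
import Mathlib


open Matrix

/-- The `k`-th standard basis vector `ε_k` of `ℂ^N`. -/
def eps {N : ℕ} (k : Fin N) : Fin N → ℂ := Pi.single k 1

/-- The flip matrix `P_{(i,j),(k,l)} = δ_{il}·δ_{jk}`. -/
def Pflip (N : ℕ) : Matrix (Fin N × Fin N) (Fin N × Fin N) ℂ :=
  Matrix.of fun p q => if p.1 = q.2 ∧ p.2 = q.1 then 1 else 0

/-- `R^{(12)}(z, λ + c·h^{(3)})`: `R` acting on the first two of three `Fin N`
tensor factors, with dynamical shift by the weight `ε` of the third column index. -/
def sh12 {N : ℕ} (R : ℂ → (Fin N → ℂ) → Matrix (Fin N × Fin N) (Fin N × Fin N) ℂ)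
    (c z : ℂ) (lam : Fin N → ℂ) :
    Matrix (Fin N × Fin N × Fin N) (Fin N × Fin N × Fin N) ℂ :=
  Matrix.of fun p q =>
    if p.2.2 = q.2.2 then R z (lam + c • eps q.2.2) (p.1, p.2.1) (q.1, q.2.1) else 0

/-- `R^{(13)}(z, λ + c·h^{(2)})`. -/
def sh13 {N : ℕ} (R : ℂ → (Fin N → ℂ) → Matrix (Fin N × Fin N) (Fin N × Fin N) ℂ)
    (c z : ℂ) (lam : Fin N → ℂ) :
    Matrix (Fin N × Fin N × Fin N) (Fin N × Fin N × Fin N) ℂ :=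
  Matrix.of fun p q =>
    if p.2.1 = q.2.1 then R z (lam + c • eps q.2.1) (p.1, p.2.2) (q.1, q.2.2) else 0

/-- `R^{(23)}(z, λ + c·h^{(1)})`. -/
def sh23 {N : ℕ} (R : ℂ → (Fin N → ℂ) → Matrix (Fin N × Fin N) (Fin N × Fin N) ℂ)
    (c z : ℂ) (lam : Fin N → ℂ) :
    Matrix (Fin N × Fin N × Fin N) (Fin N × Fin N × Fin N) ℂ :=
  Matrix.of fun p q =>
    if p.1 = q.1 then R z (lam + c • eps q.1) (p.2.1, p.2.2) (q.2.1, q.2.2) else 0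

/-- A generalized quantum R-matrix: weight zero, unitarity, and the modified
(dynamical) Yang–Baxter equation. -/
def IsGQR (N : ℕ) (η : ℂ)
    (R : ℂ → (Fin N → ℂ) → Matrix (Fin N × Fin N) (Fin N × Fin N) ℂ) : Prop :=
  (∀ (z : ℂ) (lam : Fin N → ℂ) (i j k l : Fin N),
      eps i + eps j ≠ eps k + eps l → R z lam (i, j) (k, l) = 0) ∧
  (∀ (z : ℂ) (lam : Fin N → ℂ), R z lam * Pflip N * R (-z) lam * Pflip N = 1) ∧
  (∀ (z₁ z₂ z₃ : ℂ) (lam : Fin N → ℂ),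
      sh12 R η (z₁ - z₂) lam * sh13 R (-η) (z₁ - z₃) lam * sh23 R η (z₂ - z₃) lam =
      sh23 R (-η) (z₂ - z₃) lam * sh13 R η (z₁ - z₃) lam * sh12 R (-η) (z₁ - z₂) lam)

/-- `R^{(12)}(z₁−z₂, λ + c·h^{(3)})` on `Fin N × Fin N × J`, where the dynamical
shift is by the weight `w` of the `J`-column index. -/
def rll12 {N : ℕ} (R : ℂ → (Fin N → ℂ) → Matrix (Fin N × Fin N) (Fin N × Fin N) ℂ)
    {J : Type} [DecidableEq J] (w : J → Fin N → ℂ) (c z : ℂ) (lam : Fin N → ℂ) :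
    Matrix (Fin N × Fin N × J) (Fin N × Fin N × J) ℂ :=
  Matrix.of fun p q =>
    if p.2.2 = q.2.2 then R z (lam + c • w q.2.2) (p.1, p.2.1) (q.1, q.2.1) else 0

/-- `L^{(13)}(z, λ + c·h^{(2)})` on `Fin N × Fin N × J`. -/
def rll13 {N : ℕ} {J : Type}
    (L : ℂ → (Fin N → ℂ) → Matrix (Fin N × J) (Fin N × J) ℂ)
    (c z : ℂ) (lam : Fin N → ℂ) :
    Matrix (Fin N × Fin N × J) (Fin N × Fin N × J) ℂ :=
  Matrix.of fun p q =>
    if p.2.1 = q.2.1 then L z (lam + c • eps q.2.1) (p.1, p.2.2) (q.1, q.2.2) else 0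

/-- `L^{(23)}(z, λ + c·h^{(1)})` on `Fin N × Fin N × J`. -/
def rll23 {N : ℕ} {J : Type}
    (L : ℂ → (Fin N → ℂ) → Matrix (Fin N × J) (Fin N × J) ℂ)
    (c z : ℂ) (lam : Fin N → ℂ) :
    Matrix (Fin N × Fin N × J) (Fin N × Fin N × J) ℂ :=
  Matrix.of fun p q =>
    if p.1 = q.1 then L z (lam + c • eps q.1) (p.2.1, p.2.2) (q.2.1, q.2.2) else 0

/-- A representation of `A(R)`: a finite type `J` with weight map `w` and an
`L`-operator of weight zero satisfying the `RLL` relation. -/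
def IsRep (N : ℕ) (η : ℂ)
    (R : ℂ → (Fin N → ℂ) → Matrix (Fin N × Fin N) (Fin N × Fin N) ℂ)
    (J : Type) [Fintype J] [DecidableEq J] (w : J → Fin N → ℂ)
    (L : ℂ → (Fin N → ℂ) → Matrix (Fin N × J) (Fin N × J) ℂ) : Prop :=
  (∀ (z : ℂ) (lam : Fin N → ℂ) (i k : Fin N) (m p : J),
      eps i + w m ≠ eps k + w p → L z lam (i, m) (k, p) = 0) ∧
  (∀ (z₁ z₂ : ℂ) (lam : Fin N → ℂ),
      rll12 R w η (z₁ - z₂) lam * rll13 L (-η) z₁ lam * rll23 L η z₂ lam =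
      rll23 L (-η) z₂ lam * rll13 L η z₁ lam * rll12 R w (-η) (z₁ - z₂) lam)

/-- The monodromy matrix with parameters `z₁,…,zₙ`: the ordered product (left to
right, `j = 1,…,n`) of the dynamically shifted factors
`R^{(0,j)}(z − z_j, λ − η∑_{i<j} h^{(i)} + η∑_{j<i≤n} h^{(i)})`,
acting on `Fin N × (Fin n → Fin N)`. -/
noncomputable def monoL {N : ℕ} (η : ℂ)
    (R : ℂ → (Fin N → ℂ) → Matrix (Fin N × Fin N) (Fin N × Fin N) ℂ)
    (n : ℕ) (zs : Fin n → ℂ) (z : ℂ) (lam : Fin N → ℂ) :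
    Matrix (Fin N × (Fin n → Fin N)) (Fin N × (Fin n → Fin N)) ℂ :=
  (List.ofFn fun j : Fin n =>
    Matrix.of fun p q : Fin N × (Fin n → Fin N) =>
      if ∀ i : Fin n, i ≠ j → p.2 i = q.2 i then
        R (z - zs j)
          (lam - η • (∑ i ∈ Finset.univ.filter (fun i : Fin n => i < j), eps (q.2 i))
               + η • (∑ i ∈ Finset.univ.filter (fun i : Fin n => j < i), eps (q.2 i)))
          (p.1, p.2 j) (q.1, q.2 j)
      else 0).prod

section Transport

variable {N : ℕ}

private lemma isRep_of_equiv (η : ℂ)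
    (R : ℂ → (Fin N → ℂ) → Matrix (Fin N × Fin N) (Fin N × Fin N) ℂ)
    {J J' : Type} [Fintype J] [DecidableEq J] [Fintype J'] [DecidableEq J']
    (e : J' ≃ J) (w : J → Fin N → ℂ)
    (L : ℂ → (Fin N → ℂ) → Matrix (Fin N × J) (Fin N × J) ℂ)
    (h : IsRep N η R J w L) :
    IsRep N η R J' (fun m => w (e m))
      (fun z lam => (L z lam).submatrix (Prod.map id e) (Prod.map id e)) := by
  obtain ⟨h0, hRLL⟩ := h
  constructor
  · intro z lam i k m p hne
    exact h0 z lam i k (e m) (e p) hne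
  · intro z₁ z₂ lam
    set L' : ℂ → (Fin N → ℂ) → Matrix (Fin N × J') (Fin N × J') ℂ :=
      fun z lam => (L z lam).submatrix (Prod.map id e) (Prod.map id e) with hL'
    set E : (Fin N × Fin N × J') ≃ (Fin N × Fin N × J) :=
      ⟨fun p => (p.1, p.2.1, e p.2.2), fun p => (p.1, p.2.1, e.symm p.2.2),
        fun p => by simp, fun p => by simp⟩ with hE
    have h12 : ∀ c z, rll12 R (fun m => w (e m)) c z lam
        = (rll12 R w c z lam).submatrix E E := by
      intro c z
      ext p q
      simp only [rll12, Matrix.of_apply, Matrix.submatrix_apply, hE, Equiv.coe_fn_mk,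
        EmbeddingLike.apply_eq_iff_eq]
    have h13 : ∀ c z, rll13 L' c z lam = (rll13 L c z lam).submatrix E E := by
      intro c z; ext p q; rfl
    have h23 : ∀ c z, rll23 L' c z lam = (rll23 L c z lam).submatrix E E := by
      intro c z; ext p q; rfl
    rw [h12, h13, h23, h12, h13, h23, Matrix.submatrix_mul_equiv,
      Matrix.submatrix_mul_equiv, Matrix.submatrix_mul_equiv, Matrix.submatrix_mul_equiv,
      hRLL z₁ z₂ lam]

private lemma base_isRep (η : ℂ)
    (R : ℂ → (Fin N → ℂ) → Matrix (Fin N × Fin N) (Fin N × Fin N) ℂ)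
    (hR : IsGQR N η R) (z₀ : ℂ) :
    IsRep N η R (Fin N) eps (fun z lam => R (z - z₀) lam) := by
  obtain ⟨h0, -, hYB⟩ := hR
  refine ⟨fun z lam i k m p hne => h0 _ _ _ _ _ _ hne, fun z₁ z₂ lam => ?_⟩
  have h12 : ∀ c z, rll12 R eps c z lam = sh12 R c z lam := fun _ _ => rfl
  have h13 : ∀ c z, rll13 (fun z lam => R (z - z₀) lam) c z lam = sh13 R c (z - z₀) lam :=
    fun _ _ => rfl
  have h23 : ∀ c z, rll23 (fun z lam => R (z - z₀) lam) c z lam = sh23 R c (z - z₀) lam :=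
    fun _ _ => rfl
  rw [h12, h13, h23, h12, h13, h23]
  exact hYB z₁ z₂ z₀ lam

end Transport
section Tensor

variable {N : ℕ} (η : ℂ)
  (R : ℂ → (Fin N → ℂ) → Matrix (Fin N × Fin N) (Fin N × Fin N) ℂ)
  {J1 J2 : Type} [Fintype J1] [DecidableEq J1] [Fintype J2] [DecidableEq J2]
  (w1 : J1 → Fin N → ℂ) (w2 : J2 → Fin N → ℂ)
  (L1 : ℂ → (Fin N → ℂ) → Matrix (Fin N × J1) (Fin N × J1) ℂ)
  (L2 : ℂ → (Fin N → ℂ) → Matrix (Fin N × J2) (Fin N × J2) ℂ)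

/-- The tensor product (fused) `L`-operator. -/
noncomputable def tensorL : ℂ → (Fin N → ℂ) → Matrix (Fin N × J1 × J2) (Fin N × J1 × J2) ℂ :=
  fun z lam => Matrix.of fun p q =>
    ∑ j : Fin N, L1 z (lam + η • w2 p.2.2) (p.1, p.2.1) (j, q.2.1)
      * L2 z (lam + (-η) • w1 q.2.1) (j, p.2.2) (q.1, q.2.2)

def opR12 (ca cb z : ℂ) (lam : Fin N → ℂ) :
    Matrix (Fin N × Fin N × J1 × J2) (Fin N × Fin N × J1 × J2) ℂ :=
  Matrix.of fun p q =>
    if p.2.2.1 = q.2.2.1 ∧ p.2.2.2 = q.2.2.2 then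
      R z (lam + cb • w2 q.2.2.2 + ca • w1 q.2.2.1) (p.1, p.2.1) (q.1, q.2.1) else 0

def opX1a (c2 cb z : ℂ) (lam : Fin N → ℂ) :
    Matrix (Fin N × Fin N × J1 × J2) (Fin N × Fin N × J1 × J2) ℂ :=
  Matrix.of fun p q =>
    if p.2.1 = q.2.1 ∧ p.2.2.2 = q.2.2.2 then
      L1 z (lam + cb • w2 q.2.2.2 + c2 • eps q.2.1) (p.1, p.2.2.1) (q.1, q.2.2.1) else 0

def opX2a (c1 cb z : ℂ) (lam : Fin N → ℂ) :
    Matrix (Fin N × Fin N × J1 × J2) (Fin N × Fin N × J1 × J2) ℂ :=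
  Matrix.of fun p q =>
    if p.1 = q.1 ∧ p.2.2.2 = q.2.2.2 then
      L1 z (lam + cb • w2 q.2.2.2 + c1 • eps q.1) (p.2.1, p.2.2.1) (q.2.1, q.2.2.1) else 0

def opY1b (c2 ca z : ℂ) (lam : Fin N → ℂ) :
    Matrix (Fin N × Fin N × J1 × J2) (Fin N × Fin N × J1 × J2) ℂ :=
  Matrix.of fun p q =>
    if p.2.1 = q.2.1 ∧ p.2.2.1 = q.2.2.1 then
      L2 z (lam + ca • w1 q.2.2.1 + c2 • eps q.2.1) (p.1, p.2.2.2) (q.1, q.2.2.2) else 0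

def opY2b (c1 ca z : ℂ) (lam : Fin N → ℂ) :
    Matrix (Fin N × Fin N × J1 × J2) (Fin N × Fin N × J1 × J2) ℂ :=
  Matrix.of fun p q =>
    if p.1 = q.1 ∧ p.2.2.1 = q.2.2.1 then
      L2 z (lam + ca • w1 q.2.2.1 + c1 • eps q.1) (p.2.1, p.2.2.2) (q.2.1, q.2.2.2) else 0

def promB (M : J2 → Matrix (Fin N × Fin N × J1) (Fin N × Fin N × J1) ℂ) :
    Matrix (Fin N × Fin N × J1 × J2) (Fin N × Fin N × J1 × J2) ℂ :=
  Matrix.of fun p q =>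
    if p.2.2.2 = q.2.2.2 then M q.2.2.2 (p.1, p.2.1, p.2.2.1) (q.1, q.2.1, q.2.2.1) else 0

def promA (M : J1 → Matrix (Fin N × Fin N × J2) (Fin N × Fin N × J2) ℂ) :
    Matrix (Fin N × Fin N × J1 × J2) (Fin N × Fin N × J1 × J2) ℂ :=
  Matrix.of fun p q =>
    if p.2.2.1 = q.2.2.1 then M q.2.2.1 (p.1, p.2.1, p.2.2.2) (q.1, q.2.1, q.2.2.2) else 0

lemma promB_mul (M M' : J2 → Matrix (Fin N × Fin N × J1) (Fin N × Fin N × J1) ℂ) :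
    promB M * promB M' = promB (fun b => M b * M' b) := by
  ext ⟨p1, p2, pa, pb⟩ ⟨q1, q2, qa, qb⟩
  by_cases hb : pb = qb
  · subst hb
    simp only [promB, Matrix.mul_apply, Matrix.of_apply, if_pos rfl,
      Fintype.sum_prod_type, ite_mul, zero_mul]
    simp [Finset.sum_ite_eq]
  · simp only [promB, Matrix.mul_apply, Matrix.of_apply, if_neg hb]
    refine Finset.sum_eq_zero fun t _ => ?_
    split_ifs with h1 h2 <;> simp_all

lemma promA_mul (M M' : J1 → Matrix (Fin N × Fin N × J2) (Fin N × Fin N × J2) ℂ) :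
    promA M * promA M' = promA (fun a => M a * M' a) := by
  ext ⟨p1, p2, pa, pb⟩ ⟨q1, q2, qa, qb⟩
  by_cases ha : pa = qa
  · subst ha
    simp only [promA, Matrix.mul_apply, Matrix.of_apply, if_pos rfl,
      Fintype.sum_prod_type, ite_mul, zero_mul]
    simp [Finset.sum_ite_eq]
  · simp only [promA, Matrix.mul_apply, Matrix.of_apply, if_neg ha]
    refine Finset.sum_eq_zero fun t _ => ?_
    split_ifs with h1 h2 <;> simp_all

lemma opR12_promB (ca cb z : ℂ) (lam : Fin N → ℂ) :
    opR12 R w1 w2 ca cb z lam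
      = promB (fun b => rll12 R w1 ca z (lam + cb • w2 b)) := by
  ext ⟨p1, p2, pa, pb⟩ ⟨q1, q2, qa, qb⟩
  simp only [opR12, promB, rll12, Matrix.of_apply]
  by_cases h1 : pa = qa <;> by_cases h2 : pb = qb <;> simp [h1, h2]

lemma opR12_promA (ca cb z : ℂ) (lam : Fin N → ℂ) :
    opR12 R w1 w2 ca cb z lam
      = promA (fun a => rll12 R w2 cb z (lam + ca • w1 a)) := by
  ext ⟨p1, p2, pa, pb⟩ ⟨q1, q2, qa, qb⟩
  simp only [opR12, promA, rll12, Matrix.of_apply]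
  by_cases h1 : pa = qa <;> by_cases h2 : pb = qb <;>
    simp [h1, h2, add_right_comm lam (cb • w2 qb) (ca • w1 qa)]

lemma opX1a_promB (c2 cb z : ℂ) (lam : Fin N → ℂ) :
    opX1a w2 L1 c2 cb z lam
      = promB (fun b => rll13 L1 c2 z (lam + cb • w2 b)) := by
  ext ⟨p1, p2, pa, pb⟩ ⟨q1, q2, qa, qb⟩
  simp only [opX1a, promB, rll13, Matrix.of_apply]
  by_cases h1 : p2 = q2 <;> by_cases h2 : pb = qb <;> simp [h1, h2]

lemma opX2a_promB (c1 cb z : ℂ) (lam : Fin N → ℂ) :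
    opX2a w2 L1 c1 cb z lam
      = promB (fun b => rll23 L1 c1 z (lam + cb • w2 b)) := by
  ext ⟨p1, p2, pa, pb⟩ ⟨q1, q2, qa, qb⟩
  simp only [opX2a, promB, rll23, Matrix.of_apply]
  by_cases h1 : p1 = q1 <;> by_cases h2 : pb = qb <;> simp [h1, h2]

lemma opY1b_promA (c2 ca z : ℂ) (lam : Fin N → ℂ) :
    opY1b w1 L2 c2 ca z lam
      = promA (fun a => rll13 L2 c2 z (lam + ca • w1 a)) := by
  ext ⟨p1, p2, pa, pb⟩ ⟨q1, q2, qa, qb⟩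
  simp only [opY1b, promA, rll13, Matrix.of_apply]
  by_cases h1 : p2 = q2 <;> by_cases h2 : pa = qa <;> simp [h1, h2]

lemma opY2b_promA (c1 ca z : ℂ) (lam : Fin N → ℂ) :
    opY2b w1 L2 c1 ca z lam
      = promA (fun a => rll23 L2 c1 z (lam + ca • w1 a)) := by
  ext ⟨p1, p2, pa, pb⟩ ⟨q1, q2, qa, qb⟩
  simp only [opY2b, promA, rll23, Matrix.of_apply]
  by_cases h1 : p1 = q1 <;> by_cases h2 : pa = qa <;> simp [h1, h2]
private lemma swap_key (f g : (Fin N → ℂ) → ℂ) (A A' B B' : Fin N → ℂ)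
    (hf : ∀ x, f x ≠ 0 → B = B') (hg : ∀ x, g x ≠ 0 → A = A') :
    g B * f A = f A' * g B' := by
  by_cases h2 : f A' = 0
  · by_cases h3 : g B = 0
    · simp [h2, h3]
    · rw [hg B h3, h2, zero_mul, mul_zero]
  · rw [← hf A' h2]
    by_cases h3 : g B = 0
    · simp [h3]
    · rw [hg B h3, mul_comm]

private lemma shift_eq (u : ℂ) (lam x y x' y' : Fin N → ℂ) (h : y + x = y' + x') :
    lam + u • x + u • y = lam + u • x' + u • y' := by
  rw [add_assoc, add_assoc, ← smul_add, ← smul_add, add_comm x y, add_comm x' y', h]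

/-- Swap `Y1b · X2a = X2a · Y1b`. -/
lemma swapA (h1 : ∀ (z : ℂ) (lam : Fin N → ℂ) (i k : Fin N) (m p : J1),
      eps i + w1 m ≠ eps k + w1 p → L1 z lam (i, m) (k, p) = 0)
    (h2 : ∀ (z : ℂ) (lam : Fin N → ℂ) (i k : Fin N) (m p : J2),
      eps i + w2 m ≠ eps k + w2 p → L2 z lam (i, m) (k, p) = 0)
    (u v z z' : ℂ) (lam : Fin N → ℂ) :
    opY1b w1 L2 u u z lam * opX2a w2 L1 v v z' lam
      = opX2a w2 L1 v v z' lam * opY1b w1 L2 u u z lam := by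
  ext ⟨p1, p2, pa, pb⟩ ⟨q1, q2, qa, qb⟩
  have e1 : (opY1b w1 L2 u u z lam * opX2a w2 L1 v v z' lam) (p1, p2, pa, pb) (q1, q2, qa, qb)
      = opY1b w1 L2 u u z lam (p1, p2, pa, pb) (q1, p2, pa, qb)
        * opX2a w2 L1 v v z' lam (q1, p2, pa, qb) (q1, q2, qa, qb) := by
    rw [Matrix.mul_apply]
    refine Finset.sum_eq_single _ (fun t _ ht => ?_) (fun h => absurd (Finset.mem_univ _) h)
    simp only [opY1b, opX2a, Matrix.of_apply]
    obtain ⟨t1, t2, ta, tb⟩ := t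
    split_ifs with hA hB
    · refine absurd ?_ ht
      obtain ⟨hA1, hA2⟩ := hA
      obtain ⟨hB1, hB2⟩ := hB
      simp_all
    all_goals simp
  have e2 : (opX2a w2 L1 v v z' lam * opY1b w1 L2 u u z lam) (p1, p2, pa, pb) (q1, q2, qa, qb)
      = opX2a w2 L1 v v z' lam (p1, p2, pa, pb) (p1, q2, qa, pb)
        * opY1b w1 L2 u u z lam (p1, q2, qa, pb) (q1, q2, qa, qb) := by
    rw [Matrix.mul_apply]
    refine Finset.sum_eq_single _ (fun t _ ht => ?_) (fun h => absurd (Finset.mem_univ _) h)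
    simp only [opY1b, opX2a, Matrix.of_apply]
    obtain ⟨t1, t2, ta, tb⟩ := t
    split_ifs with hA hB
    · refine absurd ?_ ht
      obtain ⟨hA1, hA2⟩ := hA
      obtain ⟨hB1, hB2⟩ := hB
      simp_all
    all_goals simp
  rw [e1, e2]
  simp only [opY1b, opX2a, Matrix.of_apply, and_self, and_true, true_and, if_pos rfl]
  exact swap_key (fun x => L1 z' x (p2, pa) (q2, qa)) (fun x => L2 z x (p1, pb) (q1, qb))
    (lam + v • w2 qb + v • eps q1) (lam + v • w2 pb + v • eps p1)
    (lam + u • w1 pa + u • eps p2) (lam + u • w1 qa + u • eps q2)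
    (fun x hx => shift_eq u lam (w1 pa) (eps p2) (w1 qa) (eps q2)
      (by by_contra hne; exact hx (h1 z' x p2 q2 pa qa hne)))
    (fun x hx => shift_eq v lam (w2 qb) (eps q1) (w2 pb) (eps p1)
      (by by_contra hne; exact hx (h2 z x p1 q1 pb qb fun hh => hne hh.symm)))

/-- Swap `X1a · Y2b = Y2b · X1a`. -/
lemma swapB (h1 : ∀ (z : ℂ) (lam : Fin N → ℂ) (i k : Fin N) (m p : J1),
      eps i + w1 m ≠ eps k + w1 p → L1 z lam (i, m) (k, p) = 0)
    (h2 : ∀ (z : ℂ) (lam : Fin N → ℂ) (i k : Fin N) (m p : J2),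
      eps i + w2 m ≠ eps k + w2 p → L2 z lam (i, m) (k, p) = 0)
    (u v z z' : ℂ) (lam : Fin N → ℂ) :
    opX1a w2 L1 u u z lam * opY2b w1 L2 v v z' lam
      = opY2b w1 L2 v v z' lam * opX1a w2 L1 u u z lam := by
  ext ⟨p1, p2, pa, pb⟩ ⟨q1, q2, qa, qb⟩
  have e1 : (opX1a w2 L1 u u z lam * opY2b w1 L2 v v z' lam) (p1, p2, pa, pb) (q1, q2, qa, qb)
      = opX1a w2 L1 u u z lam (p1, p2, pa, pb) (q1, p2, qa, pb)
        * opY2b w1 L2 v v z' lam (q1, p2, qa, pb) (q1, q2, qa, qb) := by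
    rw [Matrix.mul_apply]
    refine Finset.sum_eq_single _ (fun t _ ht => ?_) (fun h => absurd (Finset.mem_univ _) h)
    simp only [opX1a, opY2b, Matrix.of_apply]
    obtain ⟨t1, t2, ta, tb⟩ := t
    split_ifs with hA hB
    · refine absurd ?_ ht
      obtain ⟨hA1, hA2⟩ := hA
      obtain ⟨hB1, hB2⟩ := hB
      simp_all
    all_goals simp
  have e2 : (opY2b w1 L2 v v z' lam * opX1a w2 L1 u u z lam) (p1, p2, pa, pb) (q1, q2, qa, qb)
      = opY2b w1 L2 v v z' lam (p1, p2, pa, pb) (p1, q2, pa, qb)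
        * opX1a w2 L1 u u z lam (p1, q2, pa, qb) (q1, q2, qa, qb) := by
    rw [Matrix.mul_apply]
    refine Finset.sum_eq_single _ (fun t _ ht => ?_) (fun h => absurd (Finset.mem_univ _) h)
    simp only [opX1a, opY2b, Matrix.of_apply]
    obtain ⟨t1, t2, ta, tb⟩ := t
    split_ifs with hA hB
    · refine absurd ?_ ht
      obtain ⟨hA1, hA2⟩ := hA
      obtain ⟨hB1, hB2⟩ := hB
      simp_all
    all_goals simp
  rw [e1, e2]
  simp only [opX1a, opY2b, Matrix.of_apply, and_self, and_true, true_and, if_pos rfl]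
  exact swap_key (fun x => L2 z' x (p2, pb) (q2, qb)) (fun x => L1 z x (p1, pa) (q1, qa))
    (lam + v • w1 qa + v • eps q1) (lam + v • w1 pa + v • eps p1)
    (lam + u • w2 pb + u • eps p2) (lam + u • w2 qb + u • eps q2)
    (fun x hx => shift_eq u lam (w2 pb) (eps p2) (w2 qb) (eps q2)
      (by by_contra hne; exact hx (h2 z' x p2 q2 pb qb hne)))
    (fun x hx => shift_eq v lam (w1 qa) (eps q1) (w1 pa) (eps p1)
      (by by_contra hne; exact hx (h1 z x p1 q1 pa qa fun hh => hne hh.symm)))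
lemma rll12_tensor (c z : ℂ) (lam : Fin N → ℂ) :
    rll12 R (fun m : J1 × J2 => w1 m.1 + w2 m.2) c z lam = opR12 R w1 w2 c c z lam := by
  ext ⟨p1, p2, pa, pb⟩ ⟨q1, q2, qa, qb⟩
  simp only [rll12, opR12, Matrix.of_apply]
  by_cases h1 : pa = qa <;> by_cases h2 : pb = qb
  · subst h1; subst h2
    rw [if_pos rfl, if_pos ⟨rfl, rfl⟩, smul_add, ← add_assoc,
      add_right_comm lam (c • w1 pa) (c • w2 pb)]
  all_goals simp [h1, h2, Prod.ext_iff]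

lemma rll13_tensor (c z : ℂ) (lam : Fin N → ℂ) :
    rll13 (tensorL η w1 w2 L1 L2) c z lam
      = opX1a w2 L1 c η z lam * opY1b w1 L2 c (-η) z lam := by
  ext ⟨p1, p2, pa, pb⟩ ⟨q1, q2, qa, qb⟩
  rw [Matrix.mul_apply]
  have hpt : ∀ t : Fin N × Fin N × J1 × J2,
      opX1a w2 L1 c η z lam (p1, p2, pa, pb) t
        * opY1b w1 L2 c (-η) z lam t (q1, q2, qa, qb)
      = if t.2.2.2 = pb then if t.2.2.1 = qa then if t.2.1 = p2 then
          (if p2 = q2 then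
            L1 z (lam + η • w2 pb + c • eps p2) (p1, pa) (t.1, qa)
              * L2 z (lam + (-η) • w1 qa + c • eps q2) (t.1, pb) (q1, qb) else 0)
          else 0 else 0 else 0 := by
    intro ⟨t1, t2, ta, tb⟩
    simp only [opX1a, opY1b, Matrix.of_apply]
    split_ifs <;> simp_all
  simp only [hpt, Fintype.sum_prod_type, Finset.sum_ite_eq', Finset.mem_univ, if_true]
  by_cases hc : p2 = q2
  · subst hc
    simp only [rll13, tensorL, Matrix.of_apply, if_pos rfl]
    simp only [add_right_comm lam (c • eps p2)]
    simp
  · simp [rll13, hc]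

lemma rll23_tensor (c z : ℂ) (lam : Fin N → ℂ) :
    rll23 (tensorL η w1 w2 L1 L2) c z lam
      = opX2a w2 L1 c η z lam * opY2b w1 L2 c (-η) z lam := by
  ext ⟨p1, p2, pa, pb⟩ ⟨q1, q2, qa, qb⟩
  rw [Matrix.mul_apply]
  have hpt : ∀ t : Fin N × Fin N × J1 × J2,
      opX2a w2 L1 c η z lam (p1, p2, pa, pb) t
        * opY2b w1 L2 c (-η) z lam t (q1, q2, qa, qb)
      = if t.2.2.2 = pb then if t.2.2.1 = qa then if t.1 = p1 then
          (if p1 = q1 then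
            L1 z (lam + η • w2 pb + c • eps p1) (p2, pa) (t.2.1, qa)
              * L2 z (lam + (-η) • w1 qa + c • eps q1) (t.2.1, pb) (q2, qb) else 0)
          else 0 else 0 else 0 := by
    intro ⟨t1, t2, ta, tb⟩
    simp only [opX2a, opY2b, Matrix.of_apply]
    split_ifs <;> simp_all
  simp only [hpt, Fintype.sum_prod_type]
  rw [Finset.sum_comm]
  simp only [Finset.sum_ite_eq', Finset.mem_univ, if_true]
  by_cases hc : p1 = q1
  · subst hc
    simp only [rll23, tensorL, Matrix.of_apply, if_pos rfl]
    simp only [add_right_comm lam (c • eps p1)]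
    simp
  · simp [rll23, hc]

lemma rllB (h1 : IsRep N η R J1 w1 L1) (z₁ z₂ : ℂ) (lam : Fin N → ℂ) :
    opR12 R w1 w2 η η (z₁ - z₂) lam * opX1a w2 L1 (-η) η z₁ lam * opX2a w2 L1 η η z₂ lam
      = opX2a w2 L1 (-η) η z₂ lam * opX1a w2 L1 η η z₁ lam
          * opR12 R w1 w2 (-η) η (z₁ - z₂) lam := by
  rw [opR12_promB, opX1a_promB, opX2a_promB, opX1a_promB, opX2a_promB, opR12_promB,
    promB_mul, promB_mul, promB_mul, promB_mul]
  exact congrArg promB (funext fun b => h1.2 z₁ z₂ (lam + η • w2 b))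

lemma rllA (h2 : IsRep N η R J2 w2 L2) (z₁ z₂ : ℂ) (lam : Fin N → ℂ) :
    opR12 R w1 w2 (-η) η (z₁ - z₂) lam * opY1b w1 L2 (-η) (-η) z₁ lam
        * opY2b w1 L2 η (-η) z₂ lam
      = opY2b w1 L2 (-η) (-η) z₂ lam * opY1b w1 L2 η (-η) z₁ lam
          * opR12 R w1 w2 (-η) (-η) (z₁ - z₂) lam := by
  rw [opR12_promA, opY1b_promA, opY2b_promA, opY1b_promA, opY2b_promA, opR12_promA,
    promA_mul, promA_mul, promA_mul, promA_mul]
  exact congrArg promA (funext fun a => h2.2 z₁ z₂ (lam + (-η) • w1 a))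

theorem tensor_isRep (h1 : IsRep N η R J1 w1 L1) (h2 : IsRep N η R J2 w2 L2) :
    IsRep N η R (J1 × J2) (fun m => w1 m.1 + w2 m.2) (tensorL η w1 w2 L1 L2) := by
  constructor
  · intro z lam i k m p hne
    simp only [tensorL, Matrix.of_apply]
    refine Finset.sum_eq_zero fun j _ => ?_
    by_cases hL1 : L1 z (lam + η • w2 m.2) (i, m.1) (j, p.1) = 0
    · rw [hL1, zero_mul]
    · have e1 : eps i + w1 m.1 = eps j + w1 p.1 := by
        by_contra hne1; exact hL1 (h1.1 _ _ _ _ _ _ hne1)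
      have e0 : L2 z (lam + (-η) • w1 p.1) (j, m.2) (k, p.2) = 0 := by
        apply h2.1
        intro e2
        apply hne
        calc eps i + (w1 m.1 + w2 m.2) = (eps i + w1 m.1) + w2 m.2 := by rw [add_assoc]
          _ = (eps j + w1 p.1) + w2 m.2 := by rw [e1]
          _ = (eps j + w2 m.2) + w1 p.1 := by
              rw [add_assoc, add_assoc, add_comm (w1 p.1)]
          _ = (eps k + w2 p.2) + w1 p.1 := by rw [e2]
          _ = eps k + (w1 p.1 + w2 p.2) := by
              rw [add_assoc, add_comm (w2 p.2)]
      rw [e0, mul_zero]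
  · intro z₁ z₂ lam
    simp only [rll12_tensor, rll13_tensor, rll23_tensor, mul_assoc]
    rw [← mul_assoc (opY1b w1 L2 (-η) (-η) z₁ lam) (opX2a w2 L1 η η z₂ lam)
        (opY2b w1 L2 η (-η) z₂ lam),
      swapA w1 w2 L1 L2 h1.1 h2.1 (-η) η z₁ z₂ lam,
      mul_assoc (opX2a w2 L1 η η z₂ lam) (opY1b w1 L2 (-η) (-η) z₁ lam)
        (opY2b w1 L2 η (-η) z₂ lam),
      ← mul_assoc (opR12 R w1 w2 η η (z₁ - z₂) lam) (opX1a w2 L1 (-η) η z₁ lam) _,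
      ← mul_assoc (opR12 R w1 w2 η η (z₁ - z₂) lam * opX1a w2 L1 (-η) η z₁ lam)
        (opX2a w2 L1 η η z₂ lam) _,
      rllB η R w1 w2 L1 h1 z₁ z₂ lam,
      mul_assoc, mul_assoc,
      ← mul_assoc (opR12 R w1 w2 (-η) η (z₁ - z₂) lam) (opY1b w1 L2 (-η) (-η) z₁ lam)
        (opY2b w1 L2 η (-η) z₂ lam),
      rllA η R w1 w2 L2 h2 z₁ z₂ lam,
      mul_assoc]
    conv_lhs => rw [← mul_assoc (opX1a w2 L1 η η z₁ lam) (opY2b w1 L2 (-η) (-η) z₂ lam),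
      swapB w1 w2 L1 L2 h1.1 h2.1 η (-η) z₁ z₂ lam, mul_assoc]

end Tensor
section Mono

variable {N : ℕ}

private noncomputable def monoFactor (η : ℂ)
    (R : ℂ → (Fin N → ℂ) → Matrix (Fin N × Fin N) (Fin N × Fin N) ℂ)
    (n : ℕ) (zs : Fin n → ℂ) (z : ℂ) (lam : Fin N → ℂ) (j : Fin n) :
    Matrix (Fin N × (Fin n → Fin N)) (Fin N × (Fin n → Fin N)) ℂ :=
  Matrix.of fun p q =>
    if ∀ i : Fin n, i ≠ j → p.2 i = q.2 i then
      R (z - zs j)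
        (lam - η • (∑ i ∈ Finset.univ.filter (fun i : Fin n => i < j), eps (q.2 i))
             + η • (∑ i ∈ Finset.univ.filter (fun i : Fin n => j < i), eps (q.2 i)))
        (p.1, p.2 j) (q.1, q.2 j)
    else 0

private lemma monoL_eq_prod (η : ℂ)
    (R : ℂ → (Fin N → ℂ) → Matrix (Fin N × Fin N) (Fin N × Fin N) ℂ)
    (n : ℕ) (zs : Fin n → ℂ) (z : ℂ) (lam : Fin N → ℂ) :
    monoL η R n zs z lam = (List.ofFn (monoFactor η R n zs z lam)).prod := rfl

private def prom0 {n : ℕ}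
    (M : Fin N → Matrix (Fin N × (Fin n → Fin N)) (Fin N × (Fin n → Fin N)) ℂ) :
    Matrix (Fin N × (Fin (n+1) → Fin N)) (Fin N × (Fin (n+1) → Fin N)) ℂ :=
  Matrix.of fun p q =>
    if p.2 0 = q.2 0 then
      M (q.2 0) (p.1, fun i => p.2 i.succ) (q.1, fun i => q.2 i.succ) else 0

private def eV (n : ℕ) :
    ((Fin N × (Fin n → Fin N)) × Fin N) ≃ (Fin N × (Fin (n+1) → Fin N)) where
  toFun x := (x.1.1, Fin.cons x.2 x.1.2)
  invFun t := ((t.1, fun i => t.2 i.succ), t.2 0)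
  left_inv x := by
    obtain ⟨⟨j, g⟩, b⟩ := x
    simp only [Fin.cons_succ, Fin.cons_zero]
  right_inv t := by
    obtain ⟨j, f⟩ := t
    simp only [Prod.mk.injEq, true_and]
    funext i
    cases i using Fin.cases with
    | zero => simp
    | succ i => simp

private lemma prom0_one {n : ℕ} :
    prom0 (fun _ : Fin N =>
      (1 : Matrix (Fin N × (Fin n → Fin N)) (Fin N × (Fin n → Fin N)) ℂ)) = 1 := by
  ext ⟨p1, pf⟩ ⟨q1, qf⟩
  simp only [prom0, Matrix.of_apply, Matrix.one_apply, Prod.mk.injEq]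
  by_cases h0 : pf 0 = qf 0
  · by_cases h2 : (fun i : Fin n => pf i.succ) = (fun i : Fin n => qf i.succ)
    · have hf : pf = qf := by
        funext i
        cases i using Fin.cases with
        | zero => exact h0
        | succ i => exact congrFun h2 i
      simp [h0, h2, hf]
    · have hf : ¬pf = qf := fun h => h2 (by rw [h])
      simp [h0, h2, hf]
  · have hf : ¬pf = qf := fun h => h0 (by rw [h])
    simp [h0, hf]

private lemma prom0_mul {n : ℕ}
    (M M' : Fin N → Matrix (Fin N × (Fin n → Fin N)) (Fin N × (Fin n → Fin N)) ℂ) :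
    prom0 M * prom0 M' = prom0 (fun b => M b * M' b) := by
  ext ⟨p1, pf⟩ ⟨q1, qf⟩
  rw [Matrix.mul_apply]
  rw [← Fintype.sum_equiv (eV n)
    (fun x => prom0 M (p1, pf) (eV n x) * prom0 M' (eV n x) (q1, qf))
    (fun t => prom0 M (p1, pf) t * prom0 M' t (q1, qf)) (fun x => rfl)]
  have hpt : ∀ x : (Fin N × (Fin n → Fin N)) × Fin N,
      prom0 M (p1, pf) (eV n x) * prom0 M' (eV n x) (q1, qf)
        = if x.2 = qf 0 then if pf 0 = qf 0 then
            M (qf 0) (p1, fun i => pf i.succ) x.1 * M' (qf 0) x.1 (q1, fun i => qf i.succ)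
          else 0 else 0 := by
    intro ⟨⟨j, g⟩, b⟩
    simp only [prom0, eV, Equiv.coe_fn_mk, Matrix.of_apply, Fin.cons_zero]
    have hg : (fun i : Fin n => (Fin.cons b g : Fin (n+1) → Fin N) i.succ) = g :=
      funext fun i => by simp
    rw [hg]
    by_cases hb : b = qf 0
    · rw [hb]; simp
    · rw [if_neg hb, mul_zero, if_neg hb]
  simp only [hpt, Fintype.sum_prod_type]
  rw [Finset.sum_comm]
  simp only [Finset.sum_ite_eq', Finset.mem_univ, if_true]
  by_cases h0 : pf 0 = qf 0
  · simp [prom0, h0, Matrix.mul_apply, Fintype.sum_prod_type]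
    rw [Finset.sum_comm]
  · simp [prom0, h0]

private lemma listprod_prom0 {n : ℕ}
    (l : List (Fin N → Matrix (Fin N × (Fin n → Fin N)) (Fin N × (Fin n → Fin N)) ℂ)) :
    (l.map prom0).prod = prom0 (fun b => (l.map (fun K => K b)).prod) := by
  induction l with
  | nil => simp [prom0_one]
  | cons K l ih => simp [ih, prom0_mul]

private lemma sum_filt_lt_succ {n : ℕ} (j : Fin n) (g : Fin (n+1) → Fin N) :
    ∑ i ∈ Finset.univ.filter (fun i : Fin (n+1) => i < j.succ), eps (g i)
      = eps (g 0) + ∑ i ∈ Finset.univ.filter (fun i : Fin n => i < j), eps (g i.succ) := by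
  rw [Finset.sum_filter, Finset.sum_filter, Fin.sum_univ_succ]
  simp [Fin.succ_lt_succ_iff, Fin.succ_pos]

private lemma sum_filt_gt_succ {n : ℕ} (j : Fin n) (g : Fin (n+1) → Fin N) :
    ∑ i ∈ Finset.univ.filter (fun i : Fin (n+1) => j.succ < i), eps (g i)
      = ∑ i ∈ Finset.univ.filter (fun i : Fin n => j < i), eps (g i.succ) := by
  rw [Finset.sum_filter, Finset.sum_filter, Fin.sum_univ_succ]
  simp [Fin.succ_lt_succ_iff, Fin.not_lt_zero]

private lemma sum_filt_lt_zero {n : ℕ} (g : Fin (n+1) → Fin N) :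
    ∑ i ∈ Finset.univ.filter (fun i : Fin (n+1) => i < 0), eps (g i) = 0 := by
  rw [Finset.sum_filter]
  simp [Fin.not_lt_zero]

private lemma sum_filt_gt_zero {n : ℕ} (g : Fin (n+1) → Fin N) :
    ∑ i ∈ Finset.univ.filter (fun i : Fin (n+1) => 0 < i), eps (g i)
      = ∑ i : Fin n, eps (g i.succ) := by
  rw [Finset.sum_filter, Fin.sum_univ_succ]
  simp [Fin.succ_pos]

private lemma monoFactor_succ (η : ℂ)
    (R : ℂ → (Fin N → ℂ) → Matrix (Fin N × Fin N) (Fin N × Fin N) ℂ)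
    (n : ℕ) (zs : Fin (n+1) → ℂ) (z : ℂ) (lam : Fin N → ℂ) (j : Fin n) :
    monoFactor η R (n+1) zs z lam j.succ
      = prom0 (fun b => monoFactor η R n (fun i => zs i.succ) z (lam - η • eps b) j) := by
  ext ⟨p1, pf⟩ ⟨q1, qf⟩
  simp only [monoFactor, prom0, Matrix.of_apply]
  by_cases h0 : pf 0 = qf 0
  · by_cases h1 : ∀ i : Fin n, i ≠ j → pf i.succ = qf i.succ
    · have hC : ∀ i : Fin (n+1), i ≠ j.succ → pf i = qf i := by
        intro i hi
        cases i using Fin.cases with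
        | zero => exact h0
        | succ i' => exact h1 i' (fun h => hi (congrArg Fin.succ h))
      rw [if_pos hC, if_pos h0, if_pos h1, sum_filt_lt_succ, sum_filt_gt_succ, smul_add,
        sub_add_eq_sub_sub]
    · have hC : ¬ ∀ i : Fin (n+1), i ≠ j.succ → pf i = qf i := fun hC =>
        h1 fun i' hi' => hC i'.succ (fun h => hi' (Fin.succ_injective n h))
      rw [if_neg hC, if_pos h0, if_neg h1]
  · have hC : ¬ ∀ i : Fin (n+1), i ≠ j.succ → pf i = qf i := fun hC =>
      h0 (hC 0 (Fin.succ_ne_zero j).symm)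
    rw [if_neg hC, if_neg h0]

private lemma monoL_succ_eq (η : ℂ)
    (R : ℂ → (Fin N → ℂ) → Matrix (Fin N × Fin N) (Fin N × Fin N) ℂ)
    (n : ℕ) (zs : Fin (n+1) → ℂ) (z : ℂ) (lam : Fin N → ℂ) :
    monoL η R (n+1) zs z lam
      = monoFactor η R (n+1) zs z lam 0
          * prom0 (fun b => monoL η R n (fun i => zs i.succ) z (lam - η • eps b)) := by
  rw [monoL_eq_prod, List.ofFn_succ, List.prod_cons]
  congr 1
  have h : (List.ofFn fun i : Fin n => monoFactor η R (n+1) zs z lam i.succ)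
      = List.map prom0 (List.ofFn fun j : Fin n =>
          (fun b => monoFactor η R n (fun i => zs i.succ) z (lam - η • eps b) j)) := by
    rw [List.map_ofFn]
    exact congrArg List.ofFn (funext fun j => monoFactor_succ η R n zs z lam j)
  rw [h, listprod_prom0]
  refine congrArg prom0 (funext fun b => ?_)
  rw [List.map_ofFn, monoL_eq_prod]
  rfl

private def eW (n : ℕ) : (Fin (n+1) → Fin N) ≃ (Fin N × (Fin n → Fin N)) where
  toFun f := (f 0, fun i => f i.succ)
  invFun x := Fin.cons x.1 x.2
  left_inv f := by
    funext i
    cases i using Fin.cases with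
    | zero => simp
    | succ i => simp
  right_inv x := by
    obtain ⟨b, g⟩ := x
    simp only [Fin.cons_zero, Prod.mk.injEq, true_and]
    funext i
    simp

private lemma monoL_succ_submatrix (η : ℂ)
    (R : ℂ → (Fin N → ℂ) → Matrix (Fin N × Fin N) (Fin N × Fin N) ℂ)
    (n : ℕ) (zs : Fin (n+1) → ℂ) :
    monoL η R (n+1) zs
      = fun z lam =>
          ((tensorL η eps (fun k : Fin n → Fin N => ∑ i, eps (k i))
              (fun z lam => R (z - zs 0) lam) (monoL η R n (fun i => zs i.succ)) z lam).submatrix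
            (Prod.map id (eW n)) (Prod.map id (eW n))) := by
  funext z lam
  rw [monoL_succ_eq]
  ext ⟨p1, pf⟩ ⟨q1, qf⟩
  rw [Matrix.mul_apply]
  rw [← Fintype.sum_equiv (eV n)
    (fun x => monoFactor η R (n+1) zs z lam 0 (p1, pf) (eV n x)
      * prom0 (fun b => monoL η R n (fun i => zs i.succ) z (lam - η • eps b)) (eV n x) (q1, qf))
    (fun t => monoFactor η R (n+1) zs z lam 0 (p1, pf) t
      * prom0 (fun b => monoL η R n (fun i => zs i.succ) z (lam - η • eps b)) t (q1, qf))
    (fun x => rfl)]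
  have hpt : ∀ x : (Fin N × (Fin n → Fin N)) × Fin N,
      monoFactor η R (n+1) zs z lam 0 (p1, pf) (eV n x)
        * prom0 (fun b => monoL η R n (fun i => zs i.succ) z (lam - η • eps b)) (eV n x) (q1, qf)
      = if x.2 = qf 0 then if x.1.2 = (fun i => pf i.succ) then
          R (z - zs 0) (lam + η • ∑ i : Fin n, eps (pf i.succ)) (p1, pf 0) (x.1.1, qf 0)
            * monoL η R n (fun i => zs i.succ) z (lam - η • eps (qf 0))
                (x.1.1, fun i => pf i.succ) (q1, fun i => qf i.succ)
        else 0 else 0 := by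
    intro ⟨⟨j, g⟩, b⟩
    simp only [monoFactor, prom0, eV, Equiv.coe_fn_mk, Matrix.of_apply, Fin.cons_zero]
    have hg : (fun i : Fin n => (Fin.cons b g : Fin (n+1) → Fin N) i.succ) = g :=
      funext fun i => by simp
    rw [hg]
    by_cases hb : b = qf 0
    · by_cases hgg : g = (fun i => pf i.succ)
      · subst hgg
        have hC : ∀ i : Fin (n+1), i ≠ 0 → pf i = (Fin.cons b (fun i => pf i.succ) :
            Fin (n+1) → Fin N) i := by
          intro i hi
          cases i using Fin.cases with
          | zero => exact absurd rfl hi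
          | succ i' => simp
        rw [if_pos hC, if_pos hb, if_pos rfl]
        have hsum : (∑ i ∈ Finset.univ.filter (fun i : Fin (n+1) => (0:Fin (n+1)) < i),
            eps ((Fin.cons b fun i => pf i.succ : Fin (n+1) → Fin N) i))
            = ∑ i : Fin n, eps (pf i.succ) := by
          rw [sum_filt_gt_zero]
          exact Finset.sum_congr rfl fun i _ => by simp
        rw [sum_filt_lt_zero, hsum, smul_zero, sub_zero, hb, if_pos rfl]
      · have hC : ¬ ∀ i : Fin (n+1), i ≠ 0 → pf i = (Fin.cons b g : Fin (n+1) → Fin N) i :=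
          fun hC => hgg (funext fun i' => by
            have := hC i'.succ (Fin.succ_ne_zero i')
            simpa using this.symm)
        rw [if_neg hC, zero_mul, if_pos hb, if_neg hgg]
    · rw [if_neg hb, if_neg hb, mul_zero]
  simp only [hpt, Fintype.sum_prod_type]
  rw [Finset.sum_comm]
  simp only [Finset.sum_ite_eq', Finset.mem_univ, if_true]
  simp only [Matrix.submatrix_apply, Prod.map_apply, id_eq, tensorL, eW, Equiv.coe_fn_mk,
    Matrix.of_apply]
  rw [Finset.sum_comm]
  simp only [Finset.sum_ite_eq', Finset.mem_univ, if_true]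
  refine Finset.sum_congr rfl fun j _ => ?_
  rw [neg_smul, ← sub_eq_add_neg]
private lemma monoL_zero_isRep (η : ℂ)
    (R : ℂ → (Fin N → ℂ) → Matrix (Fin N × Fin N) (Fin N × Fin N) ℂ)
    (zs : Fin 0 → ℂ) :
    IsRep N η R (Fin 0 → Fin N) (fun k => ∑ i, eps (k i)) (monoL η R 0 zs) := by
  have hone : ∀ z lam, monoL η R 0 zs z lam = 1 := by
    intro z lam; rw [monoL_eq_prod]; simp
  constructor
  · intro z lam i k m p hne
    rw [hone]
    by_cases h : ((i, m) : Fin N × (Fin 0 → Fin N)) = (k, p)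
    · exfalso
      rw [Prod.mk.injEq] at h
      obtain ⟨h1, h2⟩ := h
      subst h1; subst h2
      exact hne rfl
    · simp [Matrix.one_apply, h]
  · intro z₁ z₂ lam
    have h13 : ∀ c z, rll13 (monoL η R 0 zs) c z lam = 1 := by
      intro c z
      ext ⟨a1, a2, a3⟩ ⟨b1, b2, b3⟩
      by_cases h : a2 = b2
      · subst h
        simp [rll13, hone, Matrix.one_apply, Prod.mk.injEq]
      · simp [rll13, hone, Matrix.one_apply, Prod.mk.injEq, h]
    have h23 : ∀ c z, rll23 (monoL η R 0 zs) c z lam = 1 := by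
      intro c z
      ext ⟨a1, a2, a3⟩ ⟨b1, b2, b3⟩
      by_cases h : a1 = b1
      · subst h
        simp [rll23, hone, Matrix.one_apply, Prod.mk.injEq]
      · simp [rll23, hone, Matrix.one_apply, Prod.mk.injEq, h]
    have h12 : ∀ c : ℂ, rll12 R (fun k : Fin 0 → Fin N => ∑ i, eps (k i)) c (z₁ - z₂) lam
        = rll12 R (fun k : Fin 0 → Fin N => ∑ i, eps (k i)) 0 (z₁ - z₂) lam := by
      intro c; ext p q; simp [rll12]
    rw [h13, h23, h13, h23, mul_one, mul_one, one_mul, one_mul, h12 η, h12 (-η)]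

private lemma monoL_isRep (η : ℂ)
    (R : ℂ → (Fin N → ℂ) → Matrix (Fin N × Fin N) (Fin N × Fin N) ℂ)
    (hR : IsGQR N η R) :
    ∀ (n : ℕ) (zs : Fin n → ℂ),
      IsRep N η R (Fin n → Fin N) (fun k => ∑ i, eps (k i)) (monoL η R n zs) := by
  intro n
  induction n with
  | zero => exact fun zs => monoL_zero_isRep η R zs
  | succ n ih =>
    intro zs
    have ht := tensor_isRep η R eps (fun k : Fin n → Fin N => ∑ i, eps (k i))
      (fun z lam => R (z - zs 0) lam) (monoL η R n (fun i => zs i.succ))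
      (base_isRep η R hR (zs 0)) (ih (fun i => zs i.succ))
    have htr := isRep_of_equiv η R (eW n) _ _ ht
    have hw : (fun m : Fin (n+1) → Fin N =>
        (fun x : Fin N × (Fin n → Fin N) => eps x.1 + ∑ i, eps (x.2 i)) ((eW n) m))
        = (fun k : Fin (n+1) → Fin N => ∑ i, eps (k i)) := by
      funext m
      simp only [eW, Equiv.coe_fn_mk]
      exact (Fin.sum_univ_succ fun i => eps (m i)).symm
    rw [hw] at htr
    rw [monoL_succ_submatrix η R n zs]
    exact htr

end Mono

/-- the monodromy matrix makes `(Fin n → Fin N)`, with weight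
`k ↦ ∑_i ε_{k_i}`, a representation of `A(R)`. -/
theorem monodromy_is_representation (N : ℕ) (hN : 1 ≤ N) (η : ℂ)
    (R : ℂ → (Fin N → ℂ) → Matrix (Fin N × Fin N) (Fin N × Fin N) ℂ)
    (hR : IsGQR N η R) (n : ℕ) (hn : 1 ≤ n) (zs : Fin n → ℂ) :
    IsRep N η R (Fin n → Fin N) (fun k => ∑ i : Fin n, eps (k i))
      (monoL η R n zs) := by
  exact monoL_isRep η R hR n zs
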